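/- Let k ≥ 1 be an integer and let x ∈ ℤ_{≥0}^E be a nonnegative integral vector on the edges of a bipartite graph G = (V,E) with bipartition into V^t and V^a-side constraints: x(δ(v)) = k for all v ∈ V^t. Then (by de Werra's balanced edge-colouring theorem, which may be assumed) x can be written as x¹ + ⋯ + x^k with each x^i ∈ ℤ_{≥0}^E satisfying x^i(δ(v)) = 1 for all v ∈ V^t and ⌊x(δ(v))/k⌋ ≤ x^i(δ(v)) ≤ ⌈x(δ(v))/k⌉ for all v ∈ V^a. Consequently, the polytope P = {x ∈ ℝ^E : x ≥ 0; x(δ(v)) = 1 ∀v ∈ V^t; x(δ(v)) ≥ 1 ∀v ∈ V^a} has the integer decomposition property: every integral point of kP is a sum of k integral points of P. -/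

import Mathlib

/-!
An integral point `x` of `kP` satisfies `x ≥ 0`, `x(δ(v)) = k` on `V^t` and `x(δ(v)) ≥ k` on `V^a`:
each linear constraint `L ≥ a` or `L = a` valid on `P` becomes `L ≥ k a` or `L = k a` on a
nonnegative combination of points of `P` with total weight `k`. De Werra's theorem then splits `x`
into `k` integral vectors `xⁱ ≥ 0` with `xⁱ(δ(v)) = 1` on `V^t` and
`xⁱ(δ(v)) ≥ ⌊x(δ(v))/k⌋ ≥ 1` on `V^a`, that is, into `k` integral points of `P`.
-/

open scoped Classical

noncomputable section

variable {V E : Type*}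

/-- The edges incident to `v`, for a graph given by two endpoint maps. -/
def deltaE [Fintype E] [DecidableEq V] (ep₁ ep₂ : E → V) (v : V) : Finset E :=
  Finset.univ.filter (fun e => ep₁ e = v ∨ ep₂ e = v)

/-- `scaleSet k P` is the set `kP` of sums `∑ λ_p • p` over finitely many points of `P`
with `λ ≥ 0` and `∑ λ_p = k`. -/
def scaleSet (k : ℝ) (P : Set (E → ℝ)) : Set (E → ℝ) :=
  {x | ∃ (s : Finset (E → ℝ)) (c : (E → ℝ) → ℝ),
    (↑s ⊆ P) ∧ (∀ p, 0 ≤ c p) ∧ (∑ p ∈ s, c p = k) ∧ x = ∑ p ∈ s, c p • p}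

section ScaleSet

variable {P : Set (E → ℝ)} {k a : ℝ} {x : E → ℝ}

theorem mul_le_apply_of_mem_scaleSet (L : (E → ℝ) →ₗ[ℝ] ℝ) (hP : ∀ p ∈ P, a ≤ L p)
    (hx : x ∈ scaleSet k P) : k * a ≤ L x := by
  obtain ⟨s, c, hsP, hc, rfl, rfl⟩ := hx
  simp only [map_sum, map_smul, smul_eq_mul, Finset.sum_mul]
  exact Finset.sum_le_sum fun p hp => mul_le_mul_of_nonneg_left (hP p (hsP hp)) (hc p)

theorem apply_eq_mul_of_mem_scaleSet (L : (E → ℝ) →ₗ[ℝ] ℝ) (hP : ∀ p ∈ P, L p = a)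
    (hx : x ∈ scaleSet k P) : L x = k * a := by
  obtain ⟨s, c, hsP, -, rfl, rfl⟩ := hx
  simp only [map_sum, map_smul, smul_eq_mul, Finset.sum_mul]
  exact Finset.sum_congr rfl fun p hp => by rw [hP p (hsP hp)]

end ScaleSet

def sumOver (S : Finset E) : (E → ℝ) →ₗ[ℝ] ℝ :=
  ∑ e ∈ S, LinearMap.proj e

@[simp]
theorem sumOver_apply (S : Finset E) (y : E → ℝ) : sumOver S y = ∑ e ∈ S, y e := by
  simp [sumOver]

theorem stmt18_general [Fintype E] [DecidableEq V]
    (Vt Va : Finset V)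
    (ep₁ ep₂ : E → V)
    -- de Werra's balanced edge-colouring theorem, assumed as a hypothesis
    (hdW : ∀ k : ℕ, 1 ≤ k → ∀ x : E → ℤ, (∀ e, 0 ≤ x e) →
      (∀ v ∈ Vt, ∑ e ∈ deltaE ep₁ ep₂ v, x e = (k : ℤ)) →
      ∃ f : Fin k → E → ℤ, (∀ i e, 0 ≤ f i e) ∧ x = ∑ i, f i ∧
        (∀ i, ∀ v ∈ Vt, ∑ e ∈ deltaE ep₁ ep₂ v, f i e = 1) ∧
        (∀ i, ∀ v ∈ Va,
          (∑ e ∈ deltaE ep₁ ep₂ v, x e) / (k : ℤ) ≤ ∑ e ∈ deltaE ep₁ ep₂ v, f i e ∧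
          ∑ e ∈ deltaE ep₁ ep₂ v, f i e ≤ ((∑ e ∈ deltaE ep₁ ep₂ v, x e) + k - 1) / (k : ℤ))) :
    -- consequently, the polytope `P` has the integer decomposition property
    let P : Set (E → ℝ) := {x | (∀ e, 0 ≤ x e) ∧
      (∀ v ∈ Vt, ∑ e ∈ deltaE ep₁ ep₂ v, x e = 1) ∧
      (∀ v ∈ Va, 1 ≤ ∑ e ∈ deltaE ep₁ ep₂ v, x e)}
    ∀ k : ℕ, 1 ≤ k → ∀ x : E → ℤ,
      (fun e => (x e : ℝ)) ∈ scaleSet (k : ℝ) P →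
      ∃ g : Fin k → E → ℤ, (∀ i, (fun e => (g i e : ℝ)) ∈ P) ∧ x = ∑ i, g i := by
  intro P k hk x hx
  have hx0 : ∀ e, 0 ≤ x e := fun e => by
    simpa using mul_le_apply_of_mem_scaleSet (LinearMap.proj e) (fun p hp => hp.1 e) hx
  have hxVt : ∀ v ∈ Vt, ∑ e ∈ deltaE ep₁ ep₂ v, x e = (k : ℤ) := fun v hv => by
    have := apply_eq_mul_of_mem_scaleSet (sumOver _) (fun p hp => by simpa using hp.2.1 v hv) hx
    rw [sumOver_apply, mul_one] at this
    exact_mod_cast this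
  have hxVa : ∀ v ∈ Va, (k : ℤ) ≤ ∑ e ∈ deltaE ep₁ ep₂ v, x e := fun v hv => by
    have := mul_le_apply_of_mem_scaleSet (sumOver _) (fun p hp => by simpa using hp.2.2 v hv) hx
    rw [sumOver_apply, mul_one] at this
    exact_mod_cast this
  obtain ⟨f, hf0, hxf, hfVt, hfVa⟩ := hdW k hk x hx0 hxVt
  refine ⟨f, fun i => ⟨fun e => Int.cast_nonneg (hf0 i e), fun v hv => ?_, fun v hv => ?_⟩, hxf⟩
  · beta_reduce
    exact_mod_cast hfVt i v hv
  · have hfloor : 1 ≤ (∑ e ∈ deltaE ep₁ ep₂ v, x e) / (k : ℤ) :=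
      (Int.le_ediv_iff_mul_le (by omega)).2 (by simpa using hxVa v hv)
    beta_reduce
    exact_mod_cast hfloor.trans (hfVa i v hv).1

theorem stmt18 [Fintype V] [Fintype E] [DecidableEq V]
    (Vt Va : Finset V) (hcover : Vt ∪ Va = Finset.univ) (hdisj : Disjoint Vt Va)
    (ep₁ ep₂ : E → V) (hep₁ : ∀ e, ep₁ e ∈ Vt) (hep₂ : ∀ e, ep₂ e ∈ Va)
    -- de Werra's balanced edge-colouring theorem, assumed as a hypothesis
    (hdW : ∀ k : ℕ, 1 ≤ k → ∀ x : E → ℤ, (∀ e, 0 ≤ x e) →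
      (∀ v ∈ Vt, ∑ e ∈ deltaE ep₁ ep₂ v, x e = (k : ℤ)) →
      ∃ f : Fin k → E → ℤ, (∀ i e, 0 ≤ f i e) ∧ x = ∑ i, f i ∧
        (∀ i, ∀ v ∈ Vt, ∑ e ∈ deltaE ep₁ ep₂ v, f i e = 1) ∧
        (∀ i, ∀ v ∈ Va,
          (∑ e ∈ deltaE ep₁ ep₂ v, x e) / (k : ℤ) ≤ ∑ e ∈ deltaE ep₁ ep₂ v, f i e ∧
          ∑ e ∈ deltaE ep₁ ep₂ v, f i e ≤ ((∑ e ∈ deltaE ep₁ ep₂ v, x e) + k - 1) / (k : ℤ))) :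
    -- consequently, the polytope `P` has the integer decomposition property
    let P : Set (E → ℝ) := {x | (∀ e, 0 ≤ x e) ∧
      (∀ v ∈ Vt, ∑ e ∈ deltaE ep₁ ep₂ v, x e = 1) ∧
      (∀ v ∈ Va, 1 ≤ ∑ e ∈ deltaE ep₁ ep₂ v, x e)}
    ∀ k : ℕ, 1 ≤ k → ∀ x : E → ℤ,
      (fun e => (x e : ℝ)) ∈ scaleSet (k : ℝ) P →
      ∃ g : Fin k → E → ℤ, (∀ i, (fun e => (g i e : ℝ)) ∈ P) ∧ x = ∑ i, g i :=
  stmt18_general Vt Va ep₁ ep₂ hdW
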